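/- arXiv:math/0102221 — 3 statements merged into one kernel-verified Lean document; each statement's English description precedes it below -/
import Mathlib

section
/- Let A be a commutative ring, q ∈ A with q = q₁·q₂, J an ideal of A/(q), and u : J → A/(q) an A/(q)-linear map. If there exists g ∈ A whose image ḡ ∈ A/(q) is a nonzero element of J with u(ḡ) = 0, and q₁ = gcd(q, g) in a UFD A with g = q₁·g' and gcd(q₂, g') = 1, then q₁·u = 0, i.e., q₁·u(x) = 0 for all x ∈ J. -/
/-! Linearity gives `ḡ · u(x) = x · u(ḡ) = 0`, so lifting `u(x)` to `b ∈ A` yields `q ∣ g b`,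
i.e. `q₁ q₂ ∣ q₁ g' b`. Cancelling `q₁` and using that `q₂` is prime to `g'` gives `q₂ ∣ b`,
hence `q ∣ q₁ b`, which is `q₁ · u(x) = 0`. -/

theorem Ideal.mul_apply_eq_zero_of_apply_eq_zero {B : Type*} [CommRing B] {J : Ideal B}
    (u : J →ₗ[B] B) {a : J} (ha : u a = 0) (x : J) : (a : B) * u x = 0 := by
  have hswap : (a : B) • x = (x : B) • a := by
    ext
    exact mul_comm _ _
  rw [← smul_eq_mul, ← map_smul, hswap, map_smul, ha, smul_zero]

theorem mul_dvd_mul_left_of_dvd_mul_mul_of_isRelPrime {α : Type*} [CommMonoidWithZero α] [IsCancelMulZero α]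
    [DecompositionMonoid α] {c a b d : α} (hab : IsRelPrime a b)
    (h : c * a ∣ c * b * d) : c * a ∣ c * d := by
  rcases eq_or_ne c 0 with rfl | hc
  · simp
  rw [mul_assoc, mul_dvd_mul_iff_left hc] at h
  exact mul_dvd_mul_left c (hab.dvd_of_dvd_mul_left h)

theorem stmt_2_general (A : Type*) [CommRing A] [IsDomain A] [UniqueFactorizationMonoid A]
    (q q₁ q₂ g g' : A) (hq : q = q₁ * q₂) (hg : g = q₁ * g')
    (hcop : ∀ d : A, d ∣ q₂ → d ∣ g' → IsUnit d)
    (J : Ideal (A ⧸ Ideal.span {q}))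
    (u : J →ₗ[A ⧸ Ideal.span {q}] (A ⧸ Ideal.span {q}))
    (hgJ : Ideal.Quotient.mk (Ideal.span {q}) g ∈ J)
    (hug : u ⟨Ideal.Quotient.mk (Ideal.span {q}) g, hgJ⟩ = 0) :
    ∀ x : J, Ideal.Quotient.mk (Ideal.span {q}) q₁ * u x = 0 := by
  intro x
  obtain ⟨b, hb⟩ := Ideal.Quotient.mk_surjective (u x)
  have hgb : q ∣ g * b := by
    rw [← Ideal.Quotient.eq_zero_iff_dvd, map_mul, hb]
    exact Ideal.mul_apply_eq_zero_of_apply_eq_zero u hug x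
  rw [← hb, ← map_mul, Ideal.Quotient.eq_zero_iff_dvd]
  rw [hq, hg] at hgb
  rw [hq]
  exact mul_dvd_mul_left_of_dvd_mul_mul_of_isRelPrime hcop hgb

/-- (From the proof of Proposition 1.8, i ⇒ ii.) Let `A` be a UFD, `q = q₁·q₂`,
`B = A/(q)`, `J` an ideal of `B` and `u : J → B` a `B`-linear map.  Suppose `g ∈ A`
has nonzero class `ḡ ∈ J` with `u(ḡ) = 0`, where `q₁ = gcd(q,g)`, i.e. `g = q₁·g'`
with `q₂` and `g'` having no common non-unit factor.  Then `q₁·u = 0`. -/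
theorem stmt_2 (A : Type*) [CommRing A] [IsDomain A] [UniqueFactorizationMonoid A]
    (q q₁ q₂ g g' : A) (hq : q = q₁ * q₂) (hg : g = q₁ * g')
    (hcop : ∀ d : A, d ∣ q₂ → d ∣ g' → IsUnit d)
    (J : Ideal (A ⧸ Ideal.span {q}))
    (u : J →ₗ[A ⧸ Ideal.span {q}] (A ⧸ Ideal.span {q}))
    (hgJ : Ideal.Quotient.mk (Ideal.span {q}) g ∈ J)
    (hgne : Ideal.Quotient.mk (Ideal.span {q}) g ≠ 0)
    (hug : u ⟨Ideal.Quotient.mk (Ideal.span {q}) g, hgJ⟩ = 0) :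
    ∀ x : J, Ideal.Quotient.mk (Ideal.span {q}) q₁ * u x = 0 :=
  stmt_2_general A q q₁ q₂ g g' hq hg hcop J u hgJ hug
end

section
/- Let A be an integral domain, q = q₁q₂ a nonzero element, B = A/(q), J an ideal of B, and u : J → B a B-linear map. If q₁·u = 0, then u factors through the submodule q₁·B ≅ (q₂)/(q) of B; conversely, if u factors through multiplication by q₁ (i.e., u = λ₁ ∘ w for some w : J → A/(q₂), where λ₁ : A/(q₂) → B is multiplication by q₁), then q₂·u = 0. -/
namespace Ideal.Quotient

variable {A : Type*} [CommRing A]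

theorem mem_span_mk_of_mk_mul_eq_zero [IsDomain A] {q q₁ q₂ : A} (hq : q₁ * q₂ ∣ q)
    (h₁ : q₁ ≠ 0) {b : A ⧸ span {q}} (hb : mk (span {q}) q₁ * b = 0) :
    b ∈ span {mk (span {q}) q₂} := by
  obtain ⟨a, rfl⟩ := mk_surjective b
  rw [← map_mul, eq_zero_iff_dvd] at hb
  have ha : q₂ ∣ a := (mul_dvd_mul_iff_left h₁).mp (hq.trans hb)
  exact mem_span_singleton.mpr (map_dvd _ ha)

theorem mk_mul_eq_zero_of_mem_span_mk {q q₁ q₂ : A} (hq : q ∣ q₁ * q₂)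
    {b : A ⧸ span {q}} (hb : b ∈ span {mk (span {q}) q₁}) :
    mk (span {q}) q₂ * b = 0 := by
  obtain ⟨c, rfl⟩ := mem_span_singleton'.mp hb
  rw [mul_left_comm, ← map_mul, mul_comm q₂, (eq_zero_iff_dvd _ _).mpr hq, mul_zero]

end Ideal.Quotient

theorem stmt_4_general (A : Type*) [CommRing A] [IsDomain A] (q q₁ q₂ : A)
    (hq : q = q₁ * q₂) (h₁ : q₁ ≠ 0)
    (J : Ideal (A ⧸ Ideal.span {q}))
    (u : J →ₗ[A ⧸ Ideal.span {q}] (A ⧸ Ideal.span {q})) :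
    ((∀ x : J, Ideal.Quotient.mk (Ideal.span {q}) q₁ * u x = 0) →
      ∀ x : J, u x ∈ Ideal.span {Ideal.Quotient.mk (Ideal.span {q}) q₂}) ∧
    ((∀ x : J, u x ∈ Ideal.span {Ideal.Quotient.mk (Ideal.span {q}) q₁}) →
      ∀ x : J, Ideal.Quotient.mk (Ideal.span {q}) q₂ * u x = 0) :=
  ⟨fun h x => Ideal.Quotient.mem_span_mk_of_mk_mul_eq_zero (dvd_of_eq hq.symm) h₁ (h x),
    fun h x => Ideal.Quotient.mk_mul_eq_zero_of_mem_span_mk (dvd_of_eq hq) (h x)⟩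

/-- (Proposition 1.8, ii ⇔ iii, algebraic core.)  Let `A` be an integral domain,
`q = q₁·q₂` nonzero, `B = A/(q)`, `J` an ideal of `B` and `u : J → B` a `B`-linear
map.  If `q₁·u = 0` then `u` factors through the submodule `q₁·B ≅ (q₂)/(q)`, i.e.
every value of `u` lies in the ideal generated by the class of `q₂`.  Conversely,
if `u` factors through `λ₁ : A/(q₂) → B` (multiplication by `q₁`), i.e. every value
of `u` lies in the ideal generated by the class of `q₁`, then `q₂·u = 0`. -/
theorem stmt_4 (A : Type*) [CommRing A] [IsDomain A] (q q₁ q₂ : A)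
    (hq : q = q₁ * q₂) (h₁ : q₁ ≠ 0) (h₂ : q₂ ≠ 0) (hq0 : q ≠ 0)
    (J : Ideal (A ⧸ Ideal.span {q}))
    (u : J →ₗ[A ⧸ Ideal.span {q}] (A ⧸ Ideal.span {q})) :
    ((∀ x : J, Ideal.Quotient.mk (Ideal.span {q}) q₁ * u x = 0) →
      ∀ x : J, u x ∈ Ideal.span {Ideal.Quotient.mk (Ideal.span {q}) q₂}) ∧
    ((∀ x : J, u x ∈ Ideal.span {Ideal.Quotient.mk (Ideal.span {q}) q₁}) →
      ∀ x : J, Ideal.Quotient.mk (Ideal.span {q}) q₂ * u x = 0) :=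
  stmt_4_general A q q₁ q₂ hq h₁ J u
end

section
/- Let A be a UFD, q ∈ A nonzero and not a unit, B = A/(q), J an ideal of B, and u : J → B a nonzero B-linear map. If u is not injective, then there exists a factorization q = q₁q₂ with q₁ and q₂ both non-units such that q₁·u = 0. -/
/-!
A nonzero `x` in the kernel of `u` annihilates the image of `u`, because `x * u y = y * u x`.
Lifting `x` to `a ∈ A`, the element `q₁ = gcd q a` still annihilates the image: if `q ∣ a c` then
`q ∣ gcd q a * c`. It is not a unit since `u ≠ 0`, and its cofactor `q₂ = q / q₁` is not a unit
since otherwise `q ∣ a`, i.e. `x = 0`.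
-/

theorem Ideal.coe_mul_apply_comm {R : Type*} [CommRing R] {I : Ideal R}
    (u : I →ₗ[R] R) (x y : I) : (x : R) * u y = (y : R) * u x := by
  have hxy : (x : R) • y = (y : R) • x := Subtype.ext (mul_comm _ _)
  rw [← smul_eq_mul, ← smul_eq_mul, ← u.map_smul, ← u.map_smul, hxy]

theorem Ideal.coe_mul_apply_eq_zero_of_mem_ker {R : Type*} [CommRing R] {I : Ideal R}
    {u : I →ₗ[R] R} {x : I} (hx : x ∈ LinearMap.ker u) (y : I) : (x : R) * u y = 0 := by
  rw [Ideal.coe_mul_apply_comm, LinearMap.mem_ker.mp hx, mul_zero]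

theorem Ideal.Quotient.mk_gcd_mul_eq_zero {A : Type*} [CommRing A] [GCDMonoid A] {q a : A}
    {b : A ⧸ Ideal.span {q}} (h : Ideal.Quotient.mk _ a * b = 0) :
    Ideal.Quotient.mk _ (gcd q a) * b = 0 := by
  obtain ⟨c, rfl⟩ := Ideal.Quotient.mk_surjective b
  rw [← map_mul, Ideal.Quotient.eq_zero_iff_mem, Ideal.mem_span_singleton] at h ⊢
  exact dvd_gcd_mul_of_dvd_mul h

theorem stmt_5_general (A : Type*) [CommRing A] [IsDomain A] [UniqueFactorizationMonoid A]
    (q : A)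
    (J : Ideal (A ⧸ Ideal.span {q}))
    (u : J →ₗ[A ⧸ Ideal.span {q}] (A ⧸ Ideal.span {q}))
    (hune : u ≠ 0) (hninj : ¬Function.Injective u) :
    ∃ q₁ q₂ : A, q = q₁ * q₂ ∧ ¬IsUnit q₁ ∧ ¬IsUnit q₂ ∧
      ∀ x : J, Ideal.Quotient.mk (Ideal.span {q}) q₁ * u x = 0 := by
  let : GCDMonoid A := UniqueFactorizationMonoid.toGCDMonoid A
  rw [← LinearMap.ker_eq_bot] at hninj
  obtain ⟨x, hx_ker, hx0⟩ := Submodule.exists_mem_ne_zero_of_ne_bot hninj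
  obtain ⟨a, ha⟩ := Ideal.Quotient.mk_surjective (x : A ⧸ Ideal.span {q})
  obtain ⟨q₂, hq⟩ := gcd_dvd_left q a
  have hann : ∀ y : J, Ideal.Quotient.mk _ (gcd q a) * u y = 0 := fun y =>
    Ideal.Quotient.mk_gcd_mul_eq_zero (ha ▸ Ideal.coe_mul_apply_eq_zero_of_mem_ker hx_ker y)
  refine ⟨gcd q a, q₂, hq, fun hunit => hune ?_, fun hunit => hx0 ?_, hann⟩
  · exact LinearMap.ext fun y => (hunit.map _).mul_right_eq_zero.mp (hann y)
  · have hq_assoc : Associated q (gcd q a) := by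
      simpa only [← hq] using associated_mul_unit_left (gcd q a) q₂ hunit
    have hqa : q ∣ a := hq_assoc.dvd.trans (gcd_dvd_right q a)
    exact Subtype.ext (ha ▸ Ideal.Quotient.eq_zero_iff_mem.mpr (Ideal.mem_span_singleton.mpr hqa))

/-- (Proposition 1.8, i ⇒ ii.)  Let `A` be a UFD, `q` nonzero and not a unit,
`B = A/(q)`, `J` an ideal of `B` and `u : J → B` a nonzero `B`-linear map.  If `u`
is not injective, then there is a factorization `q = q₁·q₂` with `q₁, q₂`
non-units such that `q₁·u = 0`. -/
theorem stmt_5 (A : Type*) [CommRing A] [IsDomain A] [UniqueFactorizationMonoid A]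
    (q : A) (hq0 : q ≠ 0) (hqu : ¬IsUnit q)
    (J : Ideal (A ⧸ Ideal.span {q}))
    (u : J →ₗ[A ⧸ Ideal.span {q}] (A ⧸ Ideal.span {q}))
    (hune : u ≠ 0) (hninj : ¬Function.Injective u) :
    ∃ q₁ q₂ : A, q = q₁ * q₂ ∧ ¬IsUnit q₁ ∧ ¬IsUnit q₂ ∧
      ∀ x : J, Ideal.Quotient.mk (Ideal.span {q}) q₁ * u x = 0 :=
  stmt_5_general A q J u hune hninj
end
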